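/- arXiv:1902.02044 — 2 statements merged into one kernel-verified Lean document; each statement's English description precedes it below -/
import Mathlib

section
/- Let G be an r-regular graph (r ≥ 2) with n vertices and m = nr/2 edges, and let H be a regular graph on the same n vertices whose adjacency matrix commutes with that of G. Let x_1 = n^{-1/2}·𝟙, x_2, …, x_n be an orthonormal basis of ℝⁿ of common eigenvectors of L(G) and L(H), with eigenvalues μ_i(G) and μ_i(H) respectively (μ_1(G) = μ_1(H) = 0). Then the characteristic polynomial of the Laplacian of [S(G)]_{K_m}^{H}, namely of the block matrix [[L(H) + r·I_n, −B(G)],[−B(G)ᵀ, (m+2)·I_m − J_m]], equals x·(x − (r+2))·(x − (m+2))^{m−n} · ∏_{i=2}^{n} ( x² − (m + r + μ_i(H) + 2)x + (m+2)(r + μ_i(H)) + μ_i(G) − 2r ). -/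
/-!
Subtracting from `x • 1`, the lower-right block becomes `D = (x - m - 2) • 1 + J`, which for
`x ≠ 2, m + 2` has an explicit inverse in the span of `1` and `J`. Since `B Bᵀ = 2r • 1 - L(G)` and
`B J Bᵀ = r² • J` for `r`-regular `G`, the Schur complement `x • 1 - L(H) - r • 1 - B D⁻¹ Bᵀ` is a
combination of `L(H)`, `L(G)` and `J`, hence diagonal in the common eigenbasis `v`, where `J` acts
as `n` on `v₀` and as `0` on the rest. Multiplying `det D` by these eigenvalues gives the formula,
and continuity in `x` removes the two excluded values.
-/

open Matrix SimpleGraph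

/-- The `n × m` vertex–edge incidence matrix of a graph, relative to an
enumeration `e` of its edges. -/
noncomputable def incMat {V : Type} [Fintype V] [DecidableEq V] {m : ℕ}
    (G : SimpleGraph V) [Fintype G.edgeSet] (e : Fin m ≃ G.edgeFinset) :
    Matrix V (Fin m) ℝ :=
  Matrix.of fun i j => if i ∈ (e j : Sym2 V) then (1 : ℝ) else 0

open Finset

section Incidence

variable {V : Type} [Fintype V] [DecidableEq V] {m : ℕ} (G : SimpleGraph V) [DecidableRel G.Adj]
  [Fintype G.edgeSet] (e : Fin m ≃ G.edgeFinset)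

lemma incMat_apply (i : V) (t : Fin m) : incMat G e i t = G.incMatrix ℝ i (e t) := by
  have : (e t : Sym2 V) ∈ G.edgeSet := mem_edgeFinset.mp (e t).2
  simp [incMat, incMatrix_apply', incidenceSet, this]

omit [DecidableEq V] [DecidableRel G.Adj] in
lemma sum_comp_edgeEquiv {g : Sym2 V → ℝ} (hg : ∀ E ∉ G.edgeSet, g E = 0) :
    ∑ t, g (e t) = ∑ E, g E := by
  rw [Fintype.sum_equiv e _ (fun E : G.edgeFinset => g E) fun _ => rfl, sum_coe_sort]
  exact sum_subset (subset_univ _) fun E _ hE => hg E (by simpa using hE)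

lemma incMat_mul_transpose : incMat G e * (incMat G e)ᵀ = G.degMatrix ℝ + G.adjMatrix ℝ := by
  have hreindex : incMat G e * (incMat G e)ᵀ = G.incMatrix ℝ * (G.incMatrix ℝ)ᵀ := by
    ext i j
    simp only [mul_apply, transpose_apply, incMat_apply]
    refine sum_comp_edgeEquiv G e (g := fun E => G.incMatrix ℝ i E * G.incMatrix ℝ j E)
      fun E hE => ?_
    rw [G.incMatrix_of_notMem_incidenceSet fun h => hE h.1, zero_mul]
  rw [hreindex, incMatrix_mul_transpose]
  ext i j
  by_cases hij : i = j
  · simp [hij, degMatrix]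
  · simp [hij, degMatrix, adjMatrix_apply]

lemma sum_incMat_apply (i : V) : ∑ t, incMat G e i t = G.degree i := by
  simp only [incMat_apply]
  rw [sum_comp_edgeEquiv G e fun E hE => G.incMatrix_of_notMem_incidenceSet fun h => hE h.1,
    sum_incMatrix_apply]

end Incidence

local notation "𝐉" => Matrix.of fun _ _ => (1 : ℝ)

section AllOnes

variable {ι : Type} [Fintype ι] [DecidableEq ι]

omit [DecidableEq ι] in
lemma allOnes_mul_allOnes : (𝐉 : Matrix ι ι ℝ) * 𝐉 = (Fintype.card ι : ℝ) • 𝐉 := by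
  ext i j
  simp [mul_apply]

lemma smul_one_add_allOnes_mul_eq_one {c : ℝ} (hc : c ≠ 0) (hck : c + Fintype.card ι ≠ 0) :
    (c • 1 + 𝐉 : Matrix ι ι ℝ) * ((c * (c + Fintype.card ι))⁻¹ • ((c + Fintype.card ι) • 1 - 𝐉)) =
      1 := by
  have hprod : (c • 1 + 𝐉 : Matrix ι ι ℝ) * ((c + Fintype.card ι) • 1 - 𝐉) =
      (c * (c + Fintype.card ι)) • 1 := by
    simp only [Matrix.add_mul, Matrix.mul_sub, Matrix.smul_mul, Matrix.mul_smul, Matrix.one_mul,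
      Matrix.mul_one, allOnes_mul_allOnes]
    module
  rw [Matrix.mul_smul, hprod, smul_smul, inv_mul_cancel₀ (mul_ne_zero hc hck), one_smul]

lemma det_smul_one_add_allOnes {c : ℝ} (hc : c ≠ 0) (hι : 0 < Fintype.card ι) :
    (c • 1 + 𝐉 : Matrix ι ι ℝ).det = c ^ (Fintype.card ι - 1) * (c + Fintype.card ι) := by
  have hrank_one : (c • 1 + 𝐉 : Matrix ι ι ℝ) =
      c • (1 + replicateCol Unit (fun _ : ι => c⁻¹) * replicateRow Unit (1 : ι → ℝ)) := by
    ext i j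
    by_cases h : i = j <;> simp [one_apply, h, hc, mul_apply, mul_add]
  rw [hrank_one, det_smul, det_one_add_replicateCol_mul_replicateRow]
  simp only [dotProduct, Pi.one_apply, one_mul, sum_const, card_univ, nsmul_eq_mul]
  rw [← Nat.succ_pred_eq_of_pos hι, pow_succ]
  field_simp
  push_cast
  ring

omit [DecidableEq ι] in
lemma allOnes_eq_smul_vecMulVec {v : ι → ℝ} (hv : ∀ k, v k = 1 / Real.sqrt (Fintype.card ι))
    [Nonempty ι] : (𝐉 : Matrix ι ι ℝ) = (Fintype.card ι : ℝ) • vecMulVec v v := by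
  have hN : (0 : ℝ) < Fintype.card ι := by exact_mod_cast Fintype.card_pos
  ext i j
  simp only [of_apply, Matrix.smul_apply, vecMulVec_apply, hv, smul_eq_mul]
  rw [div_mul_div_comm, one_mul, Real.mul_self_sqrt hN.le, mul_one_div_cancel hN.ne']

lemma allOnes_mulVec_of_orthonormal {v : ι → ι → ℝ} {i₀ : ι}
    (hortho : ∀ i j, v i ⬝ᵥ v j = if i = j then 1 else 0)
    (hv₀ : ∀ k, v i₀ k = 1 / Real.sqrt (Fintype.card ι)) (i : ι) :
    (𝐉 : Matrix ι ι ℝ) *ᵥ v i = (if i = i₀ then (Fintype.card ι : ℝ) else 0) • v i := by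
  have : Nonempty ι := ⟨i₀⟩
  rw [allOnes_eq_smul_vecMulVec hv₀, smul_mulVec, vecMulVec_mulVec, hortho]
  by_cases h : i = i₀
  · subst h; simp
  · simp [h, Ne.symm h]

end AllOnes

lemma det_eq_prod_of_orthonormal_eigenvectors {ι R : Type*} [Fintype ι] [DecidableEq ι]
    [CommRing R] {S : Matrix ι ι R} {v : ι → ι → R} {μ : ι → R}
    (hortho : ∀ i j, v i ⬝ᵥ v j = if i = j then 1 else 0) (heig : ∀ i, S *ᵥ v i = μ i • v i) :
    S.det = ∏ i, μ i := by
  set P : Matrix ι ι R := (of v)ᵀ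
  have hPtP : Pᵀ * P = 1 := by
    ext i j
    simpa [P, mul_apply, dotProduct, one_apply] using hortho i j
  have hSP : S * P = P * diagonal μ := by
    ext k i
    rw [mul_diagonal, mul_comm]
    simpa [P, mul_apply, mulVec, dotProduct] using congrFun (heig i) k
  have hdetP : P.det * P.det = 1 := by
    simpa using congrArg det hPtP
  calc S.det = S.det * (P.det * P.det) := by rw [hdetP, mul_one]
    _ = (∏ i, μ i) * (P.det * P.det) := by
      have := congrArg det hSP
      rw [det_mul, det_mul, det_diagonal] at this
      linear_combination P.det * this
    _ = ∏ i, μ i := by rw [hdetP, mul_one]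

lemma smul_one_sub_fromBlocks {l n R : Type*} [Fintype l] [Fintype n] [DecidableEq l]
    [DecidableEq n] [CommRing R] (x : R) (A : Matrix l l R) (B : Matrix l n R)
    (C : Matrix n l R) (D : Matrix n n R) :
    x • 1 - fromBlocks A (-B) (-C) D = fromBlocks (x • 1 - A) B C (x • 1 - D) := by
  rw [← fromBlocks_one, fromBlocks_smul, sub_eq_add_neg, fromBlocks_neg, fromBlocks_add]
  simp [sub_eq_add_neg]

section Regular

variable {V : Type} [Fintype V] [DecidableEq V] {m r : ℕ} {G : SimpleGraph V} [DecidableRel G.Adj]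
  [Fintype G.edgeSet] (e : Fin m ≃ G.edgeFinset)

omit [Fintype G.edgeSet] in
lemma SimpleGraph.IsRegularOfDegree.degMatrix_eq {R : Type*} [Semiring R]
    (hG : G.IsRegularOfDegree r) : G.degMatrix R = (r : R) • 1 := by
  ext i j
  by_cases h : i = j <;> simp [degMatrix, one_apply, h, hG.degree_eq]

lemma incMat_mul_transpose_of_isRegular (hG : G.IsRegularOfDegree r) :
    incMat G e * (incMat G e)ᵀ = (2 * r : ℝ) • 1 - G.lapMatrix ℝ := by
  rw [incMat_mul_transpose, lapMatrix, hG.degMatrix_eq]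
  module

lemma incMat_mul_allOnes_mul_transpose (hG : G.IsRegularOfDegree r) :
    incMat G e * (𝐉 : Matrix (Fin m) (Fin m) ℝ) * (incMat G e)ᵀ = ((r : ℝ) ^ 2) • 𝐉 := by
  ext i j
  simp only [mul_apply, of_apply, mul_one, transpose_apply, sum_incMat_apply, hG.degree_eq,
    ← mul_sum]
  simp [sq]

end Regular

section MergedSubdivision

variable {V : Type} [Fintype V] [DecidableEq V] {m r : ℕ} {G H : SimpleGraph V}
  [DecidableRel G.Adj] [DecidableRel H.Adj] [Fintype G.edgeSet] (e : Fin m ≃ G.edgeFinset)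
  {v : V → V → ℝ} {μG μH : V → ℝ} {i₀ : V}

lemma schurComplement_mulVec_eigenvector (hG : G.IsRegularOfDegree r)
    (hortho : ∀ i j, v i ⬝ᵥ v j = if i = j then 1 else 0)
    (hv₀ : ∀ k, v i₀ k = 1 / Real.sqrt (Fintype.card V))
    (heigG : ∀ i, G.lapMatrix ℝ *ᵥ v i = μG i • v i)
    (heigH : ∀ i, H.lapMatrix ℝ *ᵥ v i = μH i • v i) (x a d : ℝ) (i : V) :
    (x • 1 - (H.lapMatrix ℝ + (r : ℝ) • 1) -
        incMat G e * (a • (d • 1 - (𝐉 : Matrix (Fin m) (Fin m) ℝ))) * (incMat G e)ᵀ) *ᵥ v i =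
      (x - μH i - r - a * (d * (2 * r - μG i) -
        r ^ 2 * if i = i₀ then (Fintype.card V : ℝ) else 0)) • v i := by
  have hBEB : incMat G e * (a • (d • 1 - (𝐉 : Matrix (Fin m) (Fin m) ℝ))) * (incMat G e)ᵀ =
      a • (d • ((2 * r : ℝ) • 1 - G.lapMatrix ℝ) - ((r : ℝ) ^ 2) • (𝐉 : Matrix V V ℝ)) := by
    rw [← incMat_mul_transpose_of_isRegular e hG, ← incMat_mul_allOnes_mul_transpose e hG]
    simp only [Matrix.mul_smul, Matrix.smul_mul, Matrix.mul_sub, Matrix.sub_mul, Matrix.mul_one]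
  rw [hBEB]
  simp only [sub_mulVec, add_mulVec, smul_mulVec, one_mulVec, heigH, heigG,
    allOnes_mulVec_of_orthonormal hortho hv₀]
  module

lemma det_smul_one_sub_fromBlocks_of_ne (hG : G.IsRegularOfDegree r) (hr : 2 ≤ r)
    (hm : Fintype.card V * r = 2 * m)
    (hortho : ∀ i j, v i ⬝ᵥ v j = if i = j then 1 else 0)
    (hv₀ : ∀ k, v i₀ k = 1 / Real.sqrt (Fintype.card V))
    (heigG : ∀ i, G.lapMatrix ℝ *ᵥ v i = μG i • v i)
    (heigH : ∀ i, H.lapMatrix ℝ *ᵥ v i = μH i • v i)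
    (hμG₀ : μG i₀ = 0) (hμH₀ : μH i₀ = 0) {x : ℝ} (hx₂ : x ≠ 2) (hxm : x ≠ m + 2) :
    (x • 1 - fromBlocks (H.lapMatrix ℝ + (r : ℝ) • 1) (-(incMat G e)) (-(incMat G e)ᵀ)
        (((m : ℝ) + 2) • 1 - 𝐉)).det =
      x * (x - ((r : ℝ) + 2)) * (x - ((m : ℝ) + 2)) ^ (m - Fintype.card V) *
        ∏ i ∈ univ.erase i₀, (x ^ 2 - ((m : ℝ) + r + μH i + 2) * x +
          ((m : ℝ) + 2) * (r + μH i) + μG i - 2 * r) := by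
  have hV : 0 < Fintype.card V := Fintype.card_pos_iff.mpr ⟨i₀⟩
  have hVm : Fintype.card V ≤ m := by nlinarith
  set c : ℝ := x - m - 2 with hc_def
  have hc : c ≠ 0 := fun h => hxm (by linarith)
  have hd : c + m ≠ 0 := fun h => hx₂ (by linarith)
  have hD : x • 1 - (((m : ℝ) + 2) • 1 - 𝐉) = c • 1 + (𝐉 : Matrix (Fin m) (Fin m) ℝ) := by
    module
  have hinv := smul_one_add_allOnes_mul_eq_one (ι := Fin m) hc (by rwa [Fintype.card_fin])
  rw [Fintype.card_fin] at hinv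
  let := invertibleOfRightInverse _ _ hinv
  rw [smul_one_sub_fromBlocks, hD, det_fromBlocks₂₂, invOf_eq_right_inv hinv,
    det_smul_one_add_allOnes hc (by simp; omega),
    det_eq_prod_of_orthonormal_eigenvectors hortho
      (schurComplement_mulVec_eigenvector e hG hortho hv₀ heigG heigH x _ _), Fintype.card_fin]
  set μ : V → ℝ := fun i => x - μH i - r - (c * (c + m))⁻¹ * ((c + m) * (2 * r - μG i) -
    r ^ 2 * if i = i₀ then (Fintype.card V : ℝ) else 0)
  have hμ₀ : (c + m) * μ i₀ = x * (x - (r + 2)) := by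
    have hm' : (r : ℝ) ^ 2 * Fintype.card V = 2 * r * m := by
      linear_combination (r : ℝ) * (by exact_mod_cast hm : (Fintype.card V : ℝ) * r = 2 * m)
    simp only [μ, ↓reduceIte, hμG₀, hμH₀, hm']
    field_simp
    rw [hc_def]
    ring
  have hμ : ∀ i ∈ univ.erase i₀, c * μ i =
      x ^ 2 - ((m : ℝ) + r + μH i + 2) * x + ((m : ℝ) + 2) * (r + μH i) + μG i - 2 * r := by
    intro i hi
    simp only [μ, if_neg (ne_of_mem_erase hi)]
    field_simp
    rw [hc_def]
    ring
  have hpow : c ^ (m - 1) = c ^ (m - Fintype.card V) * c ^ ((univ.erase i₀).card) := by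
    rw [card_erase_of_mem (mem_univ i₀), card_univ, ← pow_add]
    congr 1
    omega
  rw [← mul_prod_erase univ μ (mem_univ i₀), hpow]
  calc _ = ((c + m) * μ i₀) * c ^ (m - Fintype.card V) * ∏ i ∈ univ.erase i₀, c * μ i := by
        rw [prod_mul_distrib, prod_const]
        ring
    _ = _ := by rw [hμ₀, prod_congr rfl hμ, hc_def]; ring

end MergedSubdivision

theorem stmt_3_general (n m r : ℕ) (hr : 2 ≤ r) (hn : 0 < n) (hm : n * r = 2 * m)
    (G H : SimpleGraph (Fin n)) [DecidableRel G.Adj] [DecidableRel H.Adj]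
    [Fintype G.edgeSet]
    (hG : G.IsRegularOfDegree r)
    (e : Fin m ≃ G.edgeFinset)
    (v : Fin n → (Fin n → ℝ)) (μG μH : Fin n → ℝ)
    (hortho : ∀ i j, v i ⬝ᵥ v j = if i = j then 1 else 0)
    (hv0 : ∀ k, v ⟨0, hn⟩ k = 1 / Real.sqrt n)
    (heigG : ∀ i, (G.lapMatrix ℝ).mulVec (v i) = μG i • v i)
    (heigH : ∀ i, (H.lapMatrix ℝ).mulVec (v i) = μH i • v i)
    (hμG0 : μG ⟨0, hn⟩ = 0) (hμH0 : μH ⟨0, hn⟩ = 0)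
    (x : ℝ) :
    (x • (1 : Matrix (Fin n ⊕ Fin m) (Fin n ⊕ Fin m) ℝ) -
        Matrix.fromBlocks (H.lapMatrix ℝ + (r : ℝ) • 1)
          (-(incMat G e)) (-(incMat G e)ᵀ)
          (((m : ℝ) + 2) • (1 : Matrix (Fin m) (Fin m) ℝ) -
            Matrix.of (fun _ _ => (1 : ℝ)))).det
      = x * (x - ((r : ℝ) + 2)) * (x - ((m : ℝ) + 2)) ^ (m - n) *
          ∏ i ∈ Finset.univ.erase (⟨0, hn⟩ : Fin n),
            (x ^ 2 - ((m : ℝ) + (r : ℝ) + μH i + 2) * x +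
              ((m : ℝ) + 2) * ((r : ℝ) + μH i) + μG i - 2 * (r : ℝ)) := by
  have hdense : Dense ({2, (m : ℝ) + 2}ᶜ : Set ℝ) := (Set.toFinite _).countable.dense_compl ℝ
  revert x
  apply funext_iff.mp
  refine Continuous.ext_on hdense (by fun_prop) (by fun_prop) fun y hy => ?_
  simp only [Set.mem_compl_iff, Set.mem_insert_iff, Set.mem_singleton_iff, not_or] at hy
  have key := det_smul_one_sub_fromBlocks_of_ne e hG hr (by rwa [Fintype.card_fin]) hortho
    (by simpa using hv0) heigG heigH hμG0 hμH0 hy.1 hy.2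
  rwa [Fintype.card_fin] at key

/-- `L`-characteristic polynomial of $[S(G)]_{K_m}^{H}$. -/
theorem stmt_3 (n m r : ℕ) (hr : 2 ≤ r) (hn : 0 < n) (hm : n * r = 2 * m)
    (G H : SimpleGraph (Fin n)) [DecidableRel G.Adj] [DecidableRel H.Adj]
    [Fintype G.edgeSet]
    (hG : G.IsRegularOfDegree r) (rH : ℕ) (hH : H.IsRegularOfDegree rH)
    (hcomm : G.adjMatrix ℝ * H.adjMatrix ℝ = H.adjMatrix ℝ * G.adjMatrix ℝ)
    (e : Fin m ≃ G.edgeFinset)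
    (v : Fin n → (Fin n → ℝ)) (μG μH : Fin n → ℝ)
    (hortho : ∀ i j, v i ⬝ᵥ v j = if i = j then 1 else 0)
    (hv0 : ∀ k, v ⟨0, hn⟩ k = 1 / Real.sqrt n)
    (heigG : ∀ i, (G.lapMatrix ℝ).mulVec (v i) = μG i • v i)
    (heigH : ∀ i, (H.lapMatrix ℝ).mulVec (v i) = μH i • v i)
    (hμG0 : μG ⟨0, hn⟩ = 0) (hμH0 : μH ⟨0, hn⟩ = 0)
    (x : ℝ) :
    (x • (1 : Matrix (Fin n ⊕ Fin m) (Fin n ⊕ Fin m) ℝ) -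
        Matrix.fromBlocks (H.lapMatrix ℝ + (r : ℝ) • 1)
          (-(incMat G e)) (-(incMat G e)ᵀ)
          (((m : ℝ) + 2) • (1 : Matrix (Fin m) (Fin m) ℝ) -
            Matrix.of (fun _ _ => (1 : ℝ)))).det
      = x * (x - ((r : ℝ) + 2)) * (x - ((m : ℝ) + 2)) ^ (m - n) *
          ∏ i ∈ Finset.univ.erase (⟨0, hn⟩ : Fin n),
            (x ^ 2 - ((m : ℝ) + (r : ℝ) + μH i + 2) * x +
              ((m : ℝ) + 2) * ((r : ℝ) + μH i) + μG i - 2 * (r : ℝ)) :=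
  stmt_3_general n m r hr hn hm G H hG e v μG μH hortho hv0 heigG heigH hμG0 hμH0 x
end

section
/- Let G be an r-regular graph (r ≥ 2) with n vertices and m = nr/2 edges, and let H be a regular graph on the same n vertices whose adjacency matrix commutes with that of G. Let x_1 = n^{-1/2}·𝟙, x_2, …, x_n be an orthonormal basis of ℝⁿ of common eigenvectors of L(G) and L(H), with eigenvalues μ_i(G) and μ_i(H) respectively (μ_1(G) = μ_1(H) = 0). Then the characteristic polynomial of the Laplacian of the overlay [S(G)]_{𝓛(G)}^{H}, namely of the block matrix [[L(H) + r·I_n, −B(G)],[−B(G)ᵀ, (2r+2)·I_m − B(G)ᵀB(G)]], equals x·(x − (r+2))·(x − (2r+2))^{m−n} · ∏_{i=2}^{n} ( x² − (r + μ_i(H) + μ_i(G) + 2)x + (r + μ_i(H))(μ_i(G) + 2) + μ_i(G) − 2r ). -/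
open Matrix SimpleGraph

lemma incMat_mul_transpose_s4 {V : Type} [Fintype V] [DecidableEq V] {m r : ℕ}
    (G : SimpleGraph V) [DecidableRel G.Adj] [Fintype G.edgeSet]
    (hG : G.IsRegularOfDegree r) (e : Fin m ≃ G.edgeFinset) :
    incMat G e * (incMat G e)ᵀ = (r : ℝ) • 1 + G.adjMatrix ℝ := by
  ext i j
  have h1 : (incMat G e * (incMat G e)ᵀ) i j
      = ∑ t : Fin m, (if i ∈ ((e t : Sym2 V)) ∧ j ∈ ((e t : Sym2 V)) then (1:ℝ) else 0) := by
    simp only [incMat, mul_apply, transpose_apply, Matrix.of_apply]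
    refine Finset.sum_congr rfl fun t _ => ?_
    by_cases h : i ∈ ((e t : Sym2 V)) <;> by_cases h' : j ∈ ((e t : Sym2 V)) <;> simp [h, h']
  rw [h1, Fintype.sum_equiv e _
    (fun E : G.edgeFinset => if i ∈ (E : Sym2 V) ∧ j ∈ (E : Sym2 V) then (1:ℝ) else 0)
    (fun t => rfl)]
  rw [Finset.sum_coe_sort G.edgeFinset
    (fun E => if i ∈ E ∧ j ∈ E then (1:ℝ) else 0)]
  rw [Finset.sum_boole]
  by_cases hij : i = j
  · subst hij
    have : Finset.filter (fun E => i ∈ E ∧ i ∈ E) G.edgeFinset = G.incidenceFinset i := by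
      rw [incidenceFinset_eq_filter]
      simp [and_self]
    rw [this, card_incidenceFinset_eq_degree, hG i]
    simp [Matrix.one_apply, Matrix.smul_apply]
  · have : Finset.filter (fun E => i ∈ E ∧ j ∈ E) G.edgeFinset
        = if G.Adj i j then {s(i,j)} else ∅ := by
      ext E
      by_cases hadj : G.Adj i j
      · simp only [hadj, if_true, Finset.mem_singleton, Finset.mem_filter, mem_edgeFinset]
        constructor
        · rintro ⟨_, h⟩; exact (Sym2.mem_and_mem_iff hij).mp h
        · rintro rfl; exact ⟨hadj, by simp⟩
      · rw [Finset.mem_filter]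
        simp only [hadj, if_false, Finset.notMem_empty, iff_false]
        rintro ⟨hE, hm⟩
        rw [(Sym2.mem_and_mem_iff hij).mp hm, mem_edgeFinset, mem_edgeSet] at hE
        exact hadj hE
    rw [this]
    by_cases hadj : G.Adj i j <;>
      simp [hadj, Matrix.one_apply, hij, Matrix.smul_apply]

lemma det_of_eigen {n : ℕ} (v : Fin n → Fin n → ℝ)
    (hortho : ∀ i j, v i ⬝ᵥ v j = if i = j then 1 else 0)
    (M : Matrix (Fin n) (Fin n) ℝ) (c : Fin n → ℝ)
    (h : ∀ i, M.mulVec (v i) = c i • v i) : M.det = ∏ i, c i := by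
  set V : Matrix (Fin n) (Fin n) ℝ := Matrix.of v with hV
  have hVV : V * Vᵀ = 1 := by
    ext i j
    simp only [mul_apply, transpose_apply, hV, Matrix.of_apply]
    rw [show ∑ k, v i k * v j k = v i ⬝ᵥ v j from rfl, hortho, Matrix.one_apply]
  have hdet : V.det * Vᵀ.det = 1 := by rw [← det_mul, hVV, det_one]
  have hne : Vᵀ.det ≠ 0 := right_ne_zero_of_mul_eq_one hdet
  have hMV : M * Vᵀ = Vᵀ * Matrix.diagonal c := by
    ext k i
    have hh := congrFun (h i) k
    simp only [mulVec, dotProduct, Pi.smul_apply, smul_eq_mul] at hh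
    simp only [mul_apply, transpose_apply, hV, Matrix.of_apply, Matrix.diagonal_apply,
      mul_ite, mul_zero]
    rw [hh, Finset.sum_ite_eq' Finset.univ i (fun x => v x k * c x)]
    simp [mul_comm]
  have := congrArg Matrix.det hMV
  rw [det_mul, det_mul, det_diagonal] at this
  exact mul_right_cancel₀ hne (by rw [this]; ring)

/-- `L`-characteristic polynomial of the overlay $[S(G)]_{\mathcal L(G)}^{H}$. -/
theorem stmt_4 (n m r : ℕ) (hr : 2 ≤ r) (hn : 0 < n) (hm : n * r = 2 * m)
    (G H : SimpleGraph (Fin n)) [DecidableRel G.Adj] [DecidableRel H.Adj]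
    [Fintype G.edgeSet]
    (hG : G.IsRegularOfDegree r) (rH : ℕ) (hH : H.IsRegularOfDegree rH)
    (hcomm : G.adjMatrix ℝ * H.adjMatrix ℝ = H.adjMatrix ℝ * G.adjMatrix ℝ)
    (e : Fin m ≃ G.edgeFinset)
    (v : Fin n → (Fin n → ℝ)) (μG μH : Fin n → ℝ)
    (hortho : ∀ i j, v i ⬝ᵥ v j = if i = j then 1 else 0)
    (hv0 : ∀ k, v ⟨0, hn⟩ k = 1 / Real.sqrt n)
    (heigG : ∀ i, (G.lapMatrix ℝ).mulVec (v i) = μG i • v i)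
    (heigH : ∀ i, (H.lapMatrix ℝ).mulVec (v i) = μH i • v i)
    (hμG0 : μG ⟨0, hn⟩ = 0) (hμH0 : μH ⟨0, hn⟩ = 0)
    (x : ℝ) :
    (x • (1 : Matrix (Fin n ⊕ Fin m) (Fin n ⊕ Fin m) ℝ) -
        Matrix.fromBlocks (H.lapMatrix ℝ + (r : ℝ) • 1)
          (-(incMat G e)) (-(incMat G e)ᵀ)
          ((2 * (r : ℝ) + 2) • (1 : Matrix (Fin m) (Fin m) ℝ) -
            (incMat G e)ᵀ * incMat G e)).det
      = x * (x - ((r : ℝ) + 2)) * (x - (2 * (r : ℝ) + 2)) ^ (m - n) *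
          ∏ i ∈ Finset.univ.erase (⟨0, hn⟩ : Fin n),
            (x ^ 2 - ((r : ℝ) + μH i + μG i + 2) * x +
              ((r : ℝ) + μH i) * (μG i + 2) + μG i - 2 * (r : ℝ)) := by
  classical
  set B : Matrix (Fin n) (Fin m) ℝ := incMat G e with hBdef
  have hmn : n ≤ m := by
    have h2 : n * 2 ≤ n * r := Nat.mul_le_mul_left n hr
    omega
  -- L(G) = r•1 - A(G)
  have hLG : G.lapMatrix ℝ = (r : ℝ) • (1 : Matrix (Fin n) (Fin n) ℝ) - G.adjMatrix ℝ := by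
    unfold SimpleGraph.lapMatrix
    congr 1
    ext i j
    by_cases hij : i = j <;>
      simp [SimpleGraph.degMatrix, Matrix.diagonal_apply, hij, hG i, hG j, Matrix.one_apply]
  -- B Bᵀ = 2r•1 − L(G)
  have hK : B * Bᵀ = (2 * (r : ℝ)) • (1 : Matrix (Fin n) (Fin n) ℝ) - G.lapMatrix ℝ := by
    rw [hBdef, incMat_mul_transpose_s4 G hG e]
    rw [show G.adjMatrix ℝ = (r : ℝ) • (1 : Matrix (Fin n) (Fin n) ℝ) - G.lapMatrix ℝ by
      rw [hLG]; abel]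
    rw [two_mul, add_smul]
    abel
  -- eigenvalue functions
  set c : ℝ → Fin n → ℝ :=
    fun y i => (y - 2 - μG i) * (y - (r : ℝ) - μH i) - (2 * (r : ℝ) - μG i) with hcdef
  set F1 : ℝ → ℝ := fun y =>
    (y • (1 : Matrix (Fin n ⊕ Fin m) (Fin n ⊕ Fin m) ℝ) -
        Matrix.fromBlocks (H.lapMatrix ℝ + (r : ℝ) • 1) (-B) (-Bᵀ)
          ((2 * (r : ℝ) + 2) • (1 : Matrix (Fin m) (Fin m) ℝ) - Bᵀ * B)).det with hF1def
  set F3 : ℝ → ℝ := fun y => (y - (2 * (r : ℝ) + 2)) ^ (m - n) * ∏ i, c y i with hF3def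
  -- Claim A : F1 = F3 at good points
  have claimA : ∀ y : ℝ, y ≠ 2 * (r : ℝ) + 2 → (∀ i, y ≠ 2 + μG i) → F1 y = F3 y := by
    intro y hy1 hy2
    set lam : ℝ := y - (2 * (r : ℝ) + 2) with hlam
    have hlam0 : lam ≠ 0 := sub_ne_zero.mpr hy1
    set E : Matrix (Fin n) (Fin n) ℝ := (y - 2) • 1 - G.lapMatrix ℝ with hEdef
    set P : Matrix (Fin n) (Fin n) ℝ := (y - (r : ℝ)) • 1 - H.lapMatrix ℝ with hPdef
    set D : Matrix (Fin m) (Fin m) ℝ := lam • 1 + Bᵀ * B with hDdef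
    -- E as lam•1 + B Bᵀ
    have hE2 : E = lam • 1 + B * Bᵀ := by
      rw [hEdef, hK, show (y - 2 : ℝ) = lam + 2 * (r : ℝ) by rw [hlam]; ring, add_smul]
      abel
    -- mulVec facts
    have hEvec : ∀ i, E.mulVec (v i) = (y - 2 - μG i) • v i := by
      intro i
      rw [hEdef, Matrix.sub_mulVec, Matrix.smul_mulVec, Matrix.one_mulVec, heigG i]
      module
    have hPvec : ∀ i, P.mulVec (v i) = (y - (r : ℝ) - μH i) • v i := by
      intro i
      rw [hPdef, Matrix.sub_mulVec, Matrix.smul_mulVec, Matrix.one_mulVec, heigH i]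
      module
    -- det E
    have hdetE : E.det = ∏ i, (y - 2 - μG i) := det_of_eigen v hortho E _ hEvec
    have hdetE0 : E.det ≠ 0 := by
      rw [hdetE]
      refine Finset.prod_ne_zero_iff.mpr fun i _ => sub_ne_zero.mpr fun h => hy2 i ?_
      have h2 : y - 2 = μG i := sub_eq_zero.mp (by linarith)
      linarith
    have hEinv : Invertible E := E.invertibleOfIsUnitDet (isUnit_iff_ne_zero.mpr hdetE0)
    -- det D = lam^(m-n) * det E
    have hdetD : D.det = lam ^ (m - n) * E.det := by
      have hD' : D = lam • ((1 : Matrix (Fin m) (Fin m) ℝ) + lam⁻¹ • (Bᵀ * B)) := by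
        rw [smul_add, smul_smul, mul_inv_cancel₀ hlam0, one_smul]
      have hE' : E = lam • ((1 : Matrix (Fin n) (Fin n) ℝ) + lam⁻¹ • (B * Bᵀ)) := by
        rw [smul_add, smul_smul, mul_inv_cancel₀ hlam0, one_smul, hE2]
      have hswap : ((1 : Matrix (Fin m) (Fin m) ℝ) + lam⁻¹ • (Bᵀ * B)).det
          = ((1 : Matrix (Fin n) (Fin n) ℝ) + lam⁻¹ • (B * Bᵀ)).det := by
        rw [show lam⁻¹ • (Bᵀ * B) = Bᵀ * (lam⁻¹ • B) from (Matrix.mul_smul _ _ _).symm,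
          Matrix.det_one_add_mul_comm,
          show (lam⁻¹ • B) * Bᵀ = lam⁻¹ • (B * Bᵀ) from Matrix.smul_mul _ _ _]
      rw [hD', hE', Matrix.det_smul, Matrix.det_smul, hswap, Fintype.card_fin, Fintype.card_fin]
      rw [← mul_assoc, ← pow_add]
      congr 2
      omega
    have hdetD0 : D.det ≠ 0 := by
      rw [hdetD]
      exact mul_ne_zero (pow_ne_zero _ hlam0) hdetE0
    have hDinv : Invertible D := D.invertibleOfIsUnitDet (isUnit_iff_ne_zero.mpr hdetD0)
    -- block decomposition
    have hblock : (y • (1 : Matrix (Fin n ⊕ Fin m) (Fin n ⊕ Fin m) ℝ) -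
        Matrix.fromBlocks (H.lapMatrix ℝ + (r : ℝ) • 1) (-B) (-Bᵀ)
          ((2 * (r : ℝ) + 2) • (1 : Matrix (Fin m) (Fin m) ℝ) - Bᵀ * B))
        = Matrix.fromBlocks P B Bᵀ D := by
      rw [← Matrix.fromBlocks_one, Matrix.fromBlocks_smul]
      ext i j
      rcases i with i | i <;> rcases j with j | j <;>
        simp [Matrix.fromBlocks, hPdef, hDdef, hlam, sub_smul, smul_zero] <;> abel
    -- push-through
    have hED : E * B = B * D := by
      rw [hE2, hDdef, Matrix.add_mul, Matrix.mul_add, Matrix.smul_mul, Matrix.mul_smul,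
        Matrix.one_mul, Matrix.mul_one, Matrix.mul_assoc]
    have hBD : B * ⅟D = ⅟E * B := by
      calc B * ⅟D = (⅟E * E) * (B * ⅟D) := by rw [invOf_mul_self, Matrix.one_mul]
        _ = ⅟E * (E * B * ⅟D) := by rw [Matrix.mul_assoc, Matrix.mul_assoc]
        _ = ⅟E * (B * D * ⅟D) := by rw [hED]
        _ = ⅟E * B := by rw [Matrix.mul_assoc, mul_invOf_self, Matrix.mul_one]
    -- Schur
    have hSchur : F1 y = D.det * (P - ⅟E * (B * Bᵀ)).det := by
      rw [hF1def]
      simp only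
      rw [hblock, Matrix.det_fromBlocks₂₂]
      congr 2
      rw [hBD, Matrix.mul_assoc]
    -- pull E inside
    have hfinal : D.det * (P - ⅟E * (B * Bᵀ)).det = lam ^ (m - n) * (E * P - B * Bᵀ).det := by
      rw [hdetD, mul_assoc, ← Matrix.det_mul, mul_sub, mul_invOf_cancel_left]
    -- diagonalize E*P - B*Bᵀ
    have hdetEP : (E * P - B * Bᵀ).det = ∏ i, c y i := by
      refine det_of_eigen v hortho _ _ fun i => ?_
      rw [Matrix.sub_mulVec, ← Matrix.mulVec_mulVec, hPvec i, Matrix.mulVec_smul, hEvec i,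
        hK, Matrix.sub_mulVec, Matrix.smul_mulVec, Matrix.one_mulVec, heigG i, hcdef]
      simp only
      module
    rw [hSchur, hfinal, hdetEP, hF3def]
  -- Claim B : F1 = F3 everywhere by continuity
  have claimB : F1 = F3 := by
    have hc1 : Continuous F1 := by
      apply Continuous.matrix_det
      exact (continuous_id.smul continuous_const).sub continuous_const
    have hc3 : Continuous F3 := by
      apply Continuous.mul
      · exact (continuous_id.sub continuous_const).pow _
      · exact continuous_finset_prod _ fun i _ => by
          simp only [hcdef]
          fun_prop
    have hS : (insert (2 * (r : ℝ) + 2) (Set.range fun i => 2 + μG i)).Countable :=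
      (Set.countable_range _).insert _
    have hdense : Dense (insert (2 * (r : ℝ) + 2) (Set.range fun i => 2 + μG i))ᶜ :=
      hS.dense_compl ℝ
    refine Continuous.ext_on hdense hc1 hc3 fun y hy => ?_
    simp only [Set.mem_compl_iff, Set.mem_insert_iff, Set.mem_range, not_or, not_exists] at hy
    exact claimA y hy.1 fun i h => hy.2 i h.symm
  -- Claim C : F3 x equals the RHS
  have claimC : F3 x = x * (x - ((r : ℝ) + 2)) * (x - (2 * (r : ℝ) + 2)) ^ (m - n) *
      ∏ i ∈ Finset.univ.erase (⟨0, hn⟩ : Fin n),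
        (x ^ 2 - ((r : ℝ) + μH i + μG i + 2) * x +
          ((r : ℝ) + μH i) * (μG i + 2) + μG i - 2 * (r : ℝ)) := by
    rw [hF3def]
    simp only
    rw [← Finset.mul_prod_erase Finset.univ (c x) (Finset.mem_univ (⟨0, hn⟩ : Fin n))]
    have h0 : c x ⟨0, hn⟩ = x * (x - ((r : ℝ) + 2)) := by
      rw [hcdef]; simp only [hμG0, hμH0]; ring
    have hprod : ∏ i ∈ Finset.univ.erase (⟨0, hn⟩ : Fin n), c x i
        = ∏ i ∈ Finset.univ.erase (⟨0, hn⟩ : Fin n),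
          (x ^ 2 - ((r : ℝ) + μH i + μG i + 2) * x +
            ((r : ℝ) + μH i) * (μG i + 2) + μG i - 2 * (r : ℝ)) := by
      refine Finset.prod_congr rfl fun i _ => ?_
      rw [hcdef]; ring
    rw [h0, hprod]
    ring
  calc F1 x = F3 x := congrFun claimB x
    _ = _ := claimC
end
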